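/- arXiv:2007.15224 — 4 statements merged into one kernel-verified Lean document; each statement's English description precedes it below -/
import Mathlib

section
/- Let Δ : [0,∞) → ℝ be continuous and γ > 0. Suppose Δ is (T,δ)-PE, i.e., there exist T > 0 and δ > 0 such that ∫_t^{t+T} Δ(s)² ds ≥ δ for all t ≥ 0. Then there exist κ > 0 and a > 0 such that every differentiable x : [0,∞) → ℝ with x'(t) = −γ·Δ(t)²·x(t) for all t ≥ 0 satisfies |x(t)| ≤ κ·e^{−a·t}·|x(0)| for all t ≥ 0. -/
open MeasureTheory

/-- Feature F2, sufficiency: If `Δ` is `(T,δ)`-PE, then the DREM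
error equation `x' = -γ Δ(t)² x` is globally exponentially stable. -/
theorem drem_pe_implies_exponential_stability (Δ : ℝ → ℝ) (γ T δ : ℝ)
    (hγ : 0 < γ) (hΔ : Continuous Δ) (hT : 0 < T) (hδ : 0 < δ)
    (hPE : ∀ t, 0 ≤ t → δ ≤ ∫ s in t..t + T, (Δ s) ^ 2) :
    ∃ κ > (0:ℝ), ∃ a > (0:ℝ), ∀ x : ℝ → ℝ,
      (∀ t, 0 ≤ t → HasDerivAt x (-γ * (Δ t) ^ 2 * x t) t) →
      ∀ t, 0 ≤ t → |x t| ≤ κ * Real.exp (-a * t) * |x 0| := by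
  have hcont : Continuous fun s => Δ s ^ 2 := hΔ.pow 2
  set F : ℝ → ℝ := fun t => ∫ s in (0:ℝ)..t, Δ s ^ 2 with hFdef
  have hint : ∀ a b : ℝ, IntervalIntegrable (fun s => Δ s ^ 2) volume a b :=
    fun a b => hcont.intervalIntegrable a b
  have hF : ∀ t : ℝ, HasDerivAt F (Δ t ^ 2) t := fun t =>
    intervalIntegral.integral_hasDerivAt_right (hint 0 t)
      hcont.aestronglyMeasurable.stronglyMeasurableAtFilter hcont.continuousAt
  -- F(nT) ≥ nδ
  have key : ∀ n : ℕ, (n : ℝ) * δ ≤ F ((n : ℝ) * T) := by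
    intro n
    induction n with
    | zero => simp [hFdef]
    | succ n ih =>
      have hsplit : F (((n : ℝ) + 1) * T) = F ((n : ℝ) * T) +
          ∫ s in ((n : ℝ) * T)..((n : ℝ) * T + T), Δ s ^ 2 := by
        rw [hFdef]
        have hr : ((n : ℝ) + 1) * T = (n : ℝ) * T + T := by ring
        simp only [hr]
        rw [← intervalIntegral.integral_add_adjacent_intervals
          (hint 0 ((n : ℝ) * T)) (hint ((n : ℝ) * T) ((n : ℝ) * T + T))]
      have hnT : (0:ℝ) ≤ (n : ℝ) * T :=
        mul_nonneg (Nat.cast_nonneg n) hT.le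
      have := hPE ((n : ℝ) * T) hnT
      push_cast
      rw [hsplit]
      nlinarith
  -- lower bound on F t
  have hFlow : ∀ t : ℝ, 0 ≤ t → δ * (t / T) - δ ≤ F t := by
    intro t ht
    set n := ⌊t / T⌋₊ with hn
    have hdivnn : 0 ≤ t / T := div_nonneg ht hT.le
    have h1 : (n : ℝ) * T ≤ t := by
      rw [← le_div_iff₀ hT]
      exact Nat.floor_le hdivnn
    have h2 : t / T < (n : ℝ) + 1 := Nat.lt_floor_add_one _
    have hmono : F ((n : ℝ) * T) ≤ F t := by
      rw [hFdef]
      simp only []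
      rw [← sub_nonneg, intervalIntegral.integral_interval_sub_left (hint 0 t)
        (hint 0 ((n : ℝ) * T))]
      exact intervalIntegral.integral_nonneg h1 (fun s _ => sq_nonneg _)
    have := key n
    nlinarith
  refine ⟨Real.exp (γ * δ), Real.exp_pos _, γ * δ / T,
    div_pos (mul_pos hγ hδ) hT, ?_⟩
  intro x hx t ht
  -- y = x * exp(γ F) is constant on [0, t]
  have hy : ∀ s ∈ Set.Icc (0:ℝ) t, x s * Real.exp (γ * F s) = x 0 * Real.exp (γ * F 0) := by
    intro s hs
    have hder : ∀ u ∈ Set.Ico (0:ℝ) t,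
        HasDerivWithinAt (fun u => x u * Real.exp (γ * F u)) 0 (Set.Ici u) u := by
      intro u hu
      have hxu := hx u hu.1
      have hexp : HasDerivAt (fun u => Real.exp (γ * F u)) 
          (Real.exp (γ * F u) * (γ * Δ u ^ 2)) u := by
        exact ((hF u).const_mul γ).exp
      have := hxu.mul hexp
      have h0 : -γ * Δ u ^ 2 * x u * Real.exp (γ * F u) +
          x u * (Real.exp (γ * F u) * (γ * Δ u ^ 2)) = 0 := by ring
      rw [h0] at this
      exact this.hasDerivWithinAt
    have hcontOn : ContinuousOn (fun u => x u * Real.exp (γ * F u)) (Set.Icc 0 t) := by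
      intro u hu
      exact ((hx u hu.1).differentiableAt.continuousAt.mul
        (((hF u).const_mul γ).exp.differentiableAt.continuousAt)).continuousWithinAt
    exact constant_of_has_deriv_right_zero hcontOn hder s hs
  have hF0 : F 0 = 0 := by simp [hFdef]
  have hxt : x t * Real.exp (γ * F t) = x 0 := by
    have := hy t ⟨ht, le_refl t⟩
    simpa [hF0] using this
  have hxt' : x t = x 0 * Real.exp (-(γ * F t)) := by
    rw [← hxt, Real.exp_neg]
    field_simp
  rw [hxt', abs_mul, abs_of_pos (Real.exp_pos _)]
  have hbound : Real.exp (-(γ * F t)) ≤ Real.exp (γ * δ) * Real.exp (-(γ * δ / T) * t) := by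
    rw [← Real.exp_add]
    apply Real.exp_le_exp.mpr
    have h3 := mul_le_mul_of_nonneg_left (hFlow t ht) hγ.le
    have he : γ * (δ * (t / T)) = γ * δ / T * t := by ring
    nlinarith
  calc |x 0| * Real.exp (-(γ * F t)) 
      ≤ |x 0| * (Real.exp (γ * δ) * Real.exp (-(γ * δ / T) * t)) := by
        exact mul_le_mul_of_nonneg_left hbound (abs_nonneg _)
    _ = Real.exp (γ * δ) * Real.exp (-(γ * δ / T) * t) * |x 0| := by ring
end

section
/- Let Δ : [0,∞) → ℝ be continuous and γ > 0. Suppose there exist κ > 0 and a > 0 such that for every t₀ ≥ 0 and every differentiable x : [0,∞) → ℝ with x'(t) = −γ·Δ(t)²·x(t) for all t ≥ 0, one has |x(t)| ≤ κ·e^{−a·(t−t₀)}·|x(t₀)| for all t ≥ t₀. Then Δ is PE, i.e., there exist T > 0 and δ > 0 such that ∫_t^{t+T} Δ(s)² ds ≥ δ for all t ≥ 0. -/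
/-!
For `F u = ∫₀ᵘ Δ²`, the function `u ↦ exp (-γ F u)` is a positive solution of the error equation, so
exponential stability from `t₀ = t` gives `exp (-γ ∫ₜ^{t+T} Δ²) ≤ κ e^{-a T}`. Once the horizon `T` is
long enough that `κ e^{-a T} ≤ e⁻¹`, this says `γ ∫ₜ^{t+T} Δ² ≥ 1` for every `t`.
-/

open MeasureTheory Real

theorem hasDerivAt_exp_mul_integral {f : ℝ → ℝ} (hf : Continuous f) (c t : ℝ) :
    HasDerivAt (fun u => exp (c * ∫ s in (0 : ℝ)..u, f s))
      (c * f t * exp (c * ∫ s in (0 : ℝ)..t, f s)) t := by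
  have hF := ((hf.integral_hasStrictDerivAt 0 t).hasDerivAt.const_mul c).exp
  convert hF using 1
  ring

theorem exp_mul_integral_le_of_abs_le {f : ℝ → ℝ} (hf : Continuous f) {c C t₀ t : ℝ}
    (h : |exp (c * ∫ s in (0 : ℝ)..t, f s)| ≤ C * |exp (c * ∫ s in (0 : ℝ)..t₀, f s)|) :
    exp (c * ∫ s in t₀..t, f s) ≤ C := by
  rw [abs_of_pos (exp_pos _), abs_of_pos (exp_pos _), ← div_le_iff₀ (exp_pos _), ← exp_sub,
    ← mul_sub, intervalIntegral.integral_interval_sub_left (hf.intervalIntegrable _ _)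
      (hf.intervalIntegrable _ _)] at h
  exact h

theorem mul_exp_neg_mul_div_le_exp_neg_one {κ a : ℝ} (hκ : 0 < κ) (ha : 0 < a) :
    κ * exp (-a * ((|log κ| + 1) / a)) ≤ exp (-1) := by
  rw [neg_mul, mul_div_cancel₀ _ ha.ne', ← exp_log hκ, ← exp_add, exp_log hκ]
  gcongr
  linarith [le_abs_self (log κ)]

theorem drem_exponential_stability_implies_pe_general (Δ : ℝ → ℝ) (γ : ℝ)
    (hΔ : Continuous Δ)
    (hGES : ∃ κ > (0:ℝ), ∃ a > (0:ℝ), ∀ t₀, 0 ≤ t₀ → ∀ x : ℝ → ℝ,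
      (∀ t, 0 ≤ t → HasDerivAt x (-γ * (Δ t) ^ 2 * x t) t) →
      ∀ t, t₀ ≤ t → |x t| ≤ κ * Real.exp (-a * (t - t₀)) * |x t₀|) :
    ∃ T > (0:ℝ), ∃ δ > (0:ℝ), ∀ t, 0 ≤ t → δ ≤ ∫ s in t..t + T, (Δ s) ^ 2 := by
  obtain ⟨κ, hκ, a, ha, hG⟩ := hGES
  have hΔ2 : Continuous fun s => Δ s ^ 2 := hΔ.pow 2
  set T := (|log κ| + 1) / a
  have hT : 0 < T := by positivity
  have hexcite : ∀ t, 0 ≤ t → 1 ≤ γ * ∫ s in t..t + T, Δ s ^ 2 := by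
    intro t ht
    have hdecay := hG t ht _ (fun u _ => hasDerivAt_exp_mul_integral hΔ2 (-γ) u) (t + T)
      (by linarith)
    rw [add_sub_cancel_left] at hdecay
    have hexp := (exp_mul_integral_le_of_abs_le hΔ2 hdecay).trans
      (mul_exp_neg_mul_div_le_exp_neg_one hκ ha)
    rw [exp_le_exp, neg_mul] at hexp
    linarith
  have hint_nonneg : 0 ≤ ∫ s in (0 : ℝ)..0 + T, Δ s ^ 2 :=
    intervalIntegral.integral_nonneg (by linarith) fun s _ => sq_nonneg (Δ s)
  have hγ : 0 < γ := pos_of_mul_pos_left (one_pos.trans_le (hexcite 0 le_rfl)) hint_nonneg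
  refine ⟨T, hT, 1 / γ, by positivity, fun t ht => ?_⟩
  rw [div_le_iff₀' hγ]
  exact hexcite t ht

/-- Feature F2, necessity: If the DREM error equation
`x' = -γ Δ(t)² x` is uniformly globally exponentially stable, then `Δ` is PE. -/
theorem drem_exponential_stability_implies_pe (Δ : ℝ → ℝ) (γ : ℝ)
    (hγ : 0 < γ) (hΔ : Continuous Δ)
    (hGES : ∃ κ > (0:ℝ), ∃ a > (0:ℝ), ∀ t₀, 0 ≤ t₀ → ∀ x : ℝ → ℝ,
      (∀ t, 0 ≤ t → HasDerivAt x (-γ * (Δ t) ^ 2 * x t) t) →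
      ∀ t, t₀ ≤ t → |x t| ≤ κ * Real.exp (-a * (t - t₀)) * |x t₀|) :
    ∃ T > (0:ℝ), ∃ δ > (0:ℝ), ∀ t, 0 ≤ t → δ ≤ ∫ s in t..t + T, (Δ s) ^ 2 :=
  drem_exponential_stability_implies_pe_general Δ γ hΔ hGES
end

section
/- Let Δ : [0,∞) → ℝ be continuous and γ > 0, and let x : [0,∞) → ℝ be differentiable with x'(t) = −γ·Δ(t)²·x(t) for all t ≥ 0. Then for all t_b ≥ t_a ≥ 0, |x(t_b)| ≤ |x(t_a)|. -/
/-! If `x' = c x` with `c ≤ 0`, then `(x²)' = 2 c x² ≤ 0`, so `x²`, and hence `|x|`, is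
nonincreasing. The DREM equation has this form with `c = -γ Δ²`. -/

open Set

theorem antitoneOn_abs_of_hasDerivAt_mul_nonpos {x c : ℝ → ℝ} {s : Set ℝ} (hs : Convex ℝ s)
    (hx : ∀ t ∈ s, HasDerivAt x (c t * x t) t) (hc : ∀ t ∈ s, c t ≤ 0) :
    AntitoneOn (fun t => |x t|) s := by
  have hsq : ∀ t ∈ s, HasDerivAt (fun u => x u ^ 2) (2 * c t * x t ^ 2) t := fun t ht =>
    ((hx t ht).fun_pow 2).congr_deriv (by ring)
  have hsq_anti : AntitoneOn (fun t => x t ^ 2) s :=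
    antitoneOn_of_hasDerivWithinAt_nonpos hs
      (fun t ht => (hsq t ht).continuousAt.continuousWithinAt)
      (fun t ht => (hsq t (interior_subset ht)).hasDerivWithinAt) fun t ht =>
      mul_nonpos_of_nonpos_of_nonneg (by linarith [hc t (interior_subset ht)]) (sq_nonneg _)
  exact fun a ha b hb hab => sq_le_sq.mp (hsq_anti ha hb hab)

theorem drem_error_monotone_general (Δ x : ℝ → ℝ) (γ : ℝ) (hγ : 0 < γ)
    (hx : ∀ t, 0 ≤ t → HasDerivAt x (-γ * (Δ t) ^ 2 * x t) t) :
    ∀ ta tb : ℝ, 0 ≤ ta → ta ≤ tb → |x tb| ≤ |x ta| := by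
  have hanti : AntitoneOn (fun t => |x t|) (Ici 0) :=
    antitoneOn_abs_of_hasDerivAt_mul_nonpos (convex_Ici 0) (fun t ht => hx t ht)
      fun t _ => mul_nonpos_of_nonpos_of_nonneg (neg_nonpos.mpr hγ.le) (sq_nonneg _)
  exact fun ta tb hta htab => hanti hta (hta.trans htab) htab

/-- Feature F3: Monotonicity of `|x|` along solutions of the
DREM error equation `x' = -γ Δ(t)² x`. -/
theorem drem_error_monotone (Δ x : ℝ → ℝ) (γ : ℝ) (hγ : 0 < γ)
    (hΔ : Continuous Δ)
    (hx : ∀ t, 0 ≤ t → HasDerivAt x (-γ * (Δ t) ^ 2 * x t) t) :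
    ∀ ta tb : ℝ, 0 ≤ ta → ta ≤ tb → |x tb| ≤ |x ta| :=
  drem_error_monotone_general Δ x γ hγ hx
end

section
/- Let q ≥ 1, α > 0, and let φ : [0,∞) → ℝ^q be continuous and bounded. Define the Kreisselmeier extended regressor Φ(t) = ∫₀ᵗ e^{−α(t−s)}·φ(s)·φ(s)ᵀ ds ∈ ℝ^{q×q} and Δ(t) = det Φ(t). If φ is (T,δ)-PE for some T > 0 and δ > 0, then Δ is PE, i.e., there exist T' > 0 and δ' > 0 such that ∫_t^{t+T'} Δ(s)² ds ≥ δ' for all t ≥ 0. -/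
open MeasureTheory

/-- The matrix `∫_a^b φ(s) φ(s)ᵀ ds`, defined entrywise. -/
noncomputable def gramOn (q : ℕ) (φ : ℝ → Fin q → ℝ) (a b : ℝ) :
    Matrix (Fin q) (Fin q) ℝ :=
  Matrix.of fun i j => ∫ s in a..b, φ s i * φ s j

/-- The Kreisselmeier extended regressor
`Φ(t) = ∫₀ᵗ e^{-α(t-s)} φ(s) φ(s)ᵀ ds`, defined entrywise. -/
noncomputable def kreisselmeierPhi (q : ℕ) (α : ℝ) (φ : ℝ → Fin q → ℝ) (t : ℝ) :
    Matrix (Fin q) (Fin q) ℝ :=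
  Matrix.of fun i j => ∫ s in (0:ℝ)..t, Real.exp (-α * (t - s)) * (φ s i * φ s j)

/-! For `s ≥ T` the weight `e^{-α(s-u)}` is at least `e^{-αT}` on the window `[s - T, s]`, so the
quadratic form of `Φ(s)` dominates `e^{-αT}` times that of the Gram matrix of `φ` over this
window. Persistent excitation therefore gives `Φ(s) ⪰ e^{-αT} δ I`, hence
`Δ(s) ≥ (e^{-αT} δ)^q` for all `s ≥ T`, and every window of length `2T` starting at `t ≥ 0`
contains the interval `[t + T, t + 2T]` on which `Δ²` is bounded below. -/

open Matrix Real

namespace Matrix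

variable {n : Type*} [Fintype n] [DecidableEq n]

theorem posSemidef_sub_smul_one_iff {M : Matrix n n ℝ} {c : ℝ} :
    (M - c • 1).PosSemidef ↔ M.IsHermitian ∧ ∀ x, c * (x ⬝ᵥ x) ≤ x ⬝ᵥ M *ᵥ x := by
  have hc : (c • 1 : Matrix n n ℝ).IsHermitian := isHermitian_one.smul (.all c)
  simp only [posSemidef_iff_dotProduct_mulVec, star_trivial, sub_mulVec, dotProduct_sub,
    smul_mulVec, one_mulVec, dotProduct_smul, smul_eq_mul, sub_nonneg]
  exact and_congr_left' ⟨fun h => by simpa using h.add hc, fun h => h.sub hc⟩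

theorem pow_card_le_det_of_posSemidef_sub_smul_one {M : Matrix n n ℝ} {c : ℝ} (hc : 0 ≤ c)
    (h : (M - c • 1).PosSemidef) : c ^ Fintype.card n ≤ M.det := by
  obtain ⟨hM, hquad⟩ := posSemidef_sub_smul_one_iff.1 h
  have hle : ∀ i, c ≤ hM.eigenvalues i := by
    intro i
    set v := hM.eigenvectorBasis i
    have hv : v.ofLp ⬝ᵥ v.ofLp = 1 := by
      have h1 : inner ℝ v v = 1 := by
        rw [real_inner_self_eq_norm_sq, hM.eigenvectorBasis.orthonormal.1 i, one_pow]
      rwa [EuclideanSpace.inner_eq_star_dotProduct, star_trivial] at h1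
    simpa [hM.eigenvalues_eq i, hv] using hquad v.ofLp
  rw [hM.det_eq_prod_eigenvalues]
  calc c ^ Fintype.card n = ∏ _i, c := by simp
    _ ≤ ∏ i, hM.eigenvalues i := Finset.prod_le_prod (fun _ _ => hc) fun i _ => hle i

end Matrix

theorem dotProduct_mulVec_of_intervalIntegral {ι : Type*} [Fintype ι] {φ : ℝ → ι → ℝ}
    (hφ : Continuous φ) {g : ℝ → ℝ} (hg : Continuous g) (a b : ℝ) (x : ι → ℝ) :
    x ⬝ᵥ (Matrix.of (fun i j => ∫ s in a..b, g s * (φ s i * φ s j)) *ᵥ x)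
      = ∫ s in a..b, g s * (φ s ⬝ᵥ x) ^ 2 := by
  calc x ⬝ᵥ (Matrix.of (fun i j => ∫ s in a..b, g s * (φ s i * φ s j)) *ᵥ x)
      = ∑ i, ∑ j, ∫ s in a..b, x i * x j * (g s * (φ s i * φ s j)) := by
        simp only [dotProduct, mulVec, of_apply, Finset.mul_sum,
          intervalIntegral.integral_const_mul]
        exact Finset.sum_congr rfl fun i _ => Finset.sum_congr rfl fun j _ => by ring
    _ = ∫ s in a..b, ∑ i, ∑ j, x i * x j * (g s * (φ s i * φ s j)) := by
        rw [intervalIntegral.integral_finsetSum fun i _ => ?_]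
        · refine Finset.sum_congr rfl fun i _ => ?_
          rw [intervalIntegral.integral_finsetSum fun j _ => ?_]
          exact (by fun_prop : Continuous _).intervalIntegrable _ _
        · exact (by fun_prop : Continuous _).intervalIntegrable _ _
    _ = ∫ s in a..b, g s * (φ s ⬝ᵥ x) ^ 2 := by
        congr 1 with s
        rw [dotProduct, sq, Finset.sum_mul_sum]
        simp only [Finset.mul_sum]
        exact Finset.sum_congr rfl fun i _ => Finset.sum_congr rfl fun j _ => by ring

theorem continuous_kreisselmeierPhi {q : ℕ} (α : ℝ) {φ : ℝ → Fin q → ℝ} (hφ : Continuous φ) :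
    Continuous (kreisselmeierPhi q α φ) :=
  continuous_matrix fun i j => (intervalIntegral.continuous_parametric_primitive_of_continuous
    (f := fun t s => exp (-α * (t - s)) * (φ s i * φ s j)) (a₀ := 0)
    (by fun_prop)).comp (continuous_id.prodMk continuous_id)

theorem kreisselmeierPhi_isHermitian {q : ℕ} (α : ℝ) (φ : ℝ → Fin q → ℝ) (t : ℝ) :
    (kreisselmeierPhi q α φ t).IsHermitian := by
  ext i j
  simp [kreisselmeierPhi, mul_comm (φ _ i)]

theorem exp_mul_integral_window_le_integral_exp_weight {α T s : ℝ} (hα : 0 ≤ α) (hT : 0 ≤ T)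
    (hTs : T ≤ s) {g : ℝ → ℝ} (hg : Continuous g) (hg0 : ∀ u, 0 ≤ g u) :
    exp (-α * T) * ∫ u in s - T..s, g u ≤ ∫ u in 0..s, exp (-α * (s - u)) * g u := by
  have hint : ∀ a b, IntervalIntegrable (fun u => exp (-α * (s - u)) * g u) volume a b :=
    fun a b => (by fun_prop : Continuous _).intervalIntegrable a b
  rw [← intervalIntegral.integral_const_mul,
    ← intervalIntegral.integral_add_adjacent_intervals (hint 0 (s - T)) (hint (s - T) s)]
  calc ∫ u in s - T..s, exp (-α * T) * g u
      ≤ ∫ u in s - T..s, exp (-α * (s - u)) * g u := by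
        refine intervalIntegral.integral_mono_on (by linarith)
          ((by fun_prop : Continuous _).intervalIntegrable _ _) (hint _ _) fun u hu => ?_
        exact mul_le_mul_of_nonneg_right (exp_le_exp.2 (by nlinarith [hu.1])) (hg0 u)
    _ ≤ _ := le_add_of_nonneg_left <| intervalIntegral.integral_nonneg (by linarith)
        fun u _ => mul_nonneg (exp_nonneg _) (hg0 u)

theorem kreisselmeierPhi_sub_smul_one_posSemidef {q : ℕ} {α T δ s : ℝ} {φ : ℝ → Fin q → ℝ}
    (hφ : Continuous φ) (hα : 0 ≤ α) (hT : 0 ≤ T) (hTs : T ≤ s)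
    (hG : (gramOn q φ (s - T) s - δ • 1).PosSemidef) :
    (kreisselmeierPhi q α φ s - (exp (-α * T) * δ) • 1).PosSemidef := by
  rw [posSemidef_sub_smul_one_iff] at hG ⊢
  refine ⟨kreisselmeierPhi_isHermitian α φ s, fun x => ?_⟩
  have hφx : Continuous fun u => φ u ⬝ᵥ x := by fun_prop
  have hGx : x ⬝ᵥ gramOn q φ (s - T) s *ᵥ x = ∫ u in s - T..s, (φ u ⬝ᵥ x) ^ 2 := by
    simpa [gramOn] using
      dotProduct_mulVec_of_intervalIntegral (g := fun _ => 1) hφ continuous_const (s - T) s x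
  calc exp (-α * T) * δ * (x ⬝ᵥ x)
      = exp (-α * T) * (δ * (x ⬝ᵥ x)) := mul_assoc _ _ _
    _ ≤ exp (-α * T) * ∫ u in s - T..s, (φ u ⬝ᵥ x) ^ 2 := by
        gcongr
        exact hGx ▸ hG.2 x
    _ ≤ ∫ u in 0..s, exp (-α * (s - u)) * (φ u ⬝ᵥ x) ^ 2 :=
        exp_mul_integral_window_le_integral_exp_weight hα hT hTs (hφx.pow 2) fun _ => sq_nonneg _
    _ = x ⬝ᵥ kreisselmeierPhi q α φ s *ᵥ x :=
        (dotProduct_mulVec_of_intervalIntegral hφ (by fun_prop) 0 s x).symm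

theorem mul_le_integral_of_le_on_Ici {f : ℝ → ℝ} (hf : Continuous f) (hf0 : ∀ s, 0 ≤ f s)
    {T c t : ℝ} (hT : 0 ≤ T) (hc : ∀ s, T ≤ s → c ≤ f s) (ht : 0 ≤ t) :
    T * c ≤ ∫ s in t..t + (T + T), f s := by
  rw [← intervalIntegral.integral_add_adjacent_intervals (b := t + T) (hf.intervalIntegrable _ _)
    (hf.intervalIntegrable _ _)]
  calc T * c = ∫ _ in t + T..t + (T + T), c := by simp
    _ ≤ ∫ s in t + T..t + (T + T), f s :=
        intervalIntegral.integral_mono_on (by linarith) intervalIntegrable_const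
          (hf.intervalIntegrable _ _) fun s hs => hc s (by linarith [hs.1])
    _ ≤ _ := le_add_of_nonneg_left <| intervalIntegral.integral_nonneg (by linarith)
        fun s _ => hf0 s

theorem kreisselmeier_pe_implies_det_pe_general (q : ℕ) (α : ℝ)
    (hα : 0 < α) (φ : ℝ → Fin q → ℝ) (hφc : Continuous φ)
    (T δ : ℝ) (hT : 0 < T) (hδ : 0 < δ)
    (hPE : ∀ t, 0 ≤ t →
      (gramOn q φ t (t + T) - δ • (1 : Matrix (Fin q) (Fin q) ℝ)).PosSemidef) :
    ∃ T' > (0:ℝ), ∃ δ' > (0:ℝ), ∀ t, 0 ≤ t →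
      δ' ≤ ∫ s in t..t + T', ((kreisselmeierPhi q α φ s).det) ^ 2 := by
  set c := exp (-α * T) * δ
  have hc : 0 < c := by positivity
  have hdet : ∀ s, T ≤ s → c ^ q ≤ (kreisselmeierPhi q α φ s).det := fun s hs => by
    have hG := hPE (s - T) (by linarith)
    rw [sub_add_cancel] at hG
    simpa using pow_card_le_det_of_posSemidef_sub_smul_one hc.le
      (kreisselmeierPhi_sub_smul_one_posSemidef hφc hα.le hT.le hs hG)
  refine ⟨T + T, by positivity, T * (c ^ q) ^ 2, by positivity, fun t ht => ?_⟩
  exact mul_le_integral_of_le_on_Ici ((continuous_kreisselmeierPhi α hφc).matrix_det.pow 2)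
    (fun _ => sq_nonneg _) hT.le (fun s hs => pow_le_pow_left₀ (by positivity) (hdet s hs) 2) ht

/-- Result R1, ⇒: If `φ` is `(T,δ)`-PE then `Δ = det Φ` is PE. -/
theorem kreisselmeier_pe_implies_det_pe (q : ℕ) (hq : 1 ≤ q) (α : ℝ)
    (hα : 0 < α) (φ : ℝ → Fin q → ℝ) (hφc : Continuous φ)
    (hφb : ∃ C, ∀ t, 0 ≤ t → ‖φ t‖ ≤ C)
    (T δ : ℝ) (hT : 0 < T) (hδ : 0 < δ)
    (hPE : ∀ t, 0 ≤ t →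
      (gramOn q φ t (t + T) - δ • (1 : Matrix (Fin q) (Fin q) ℝ)).PosSemidef) :
    ∃ T' > (0:ℝ), ∃ δ' > (0:ℝ), ∀ t, 0 ≤ t →
      δ' ≤ ∫ s in t..t + T', ((kreisselmeierPhi q α φ s).det) ^ 2 :=
  kreisselmeier_pe_implies_det_pe_general q α hα φ hφc T δ hT hδ hPE
end
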